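/- arXiv:0710.2974 — 2 statements merged into one kernel-verified Lean document; each statement's English description precedes it below -/
import Mathlib

section
/- (Positivity of the ergodic constant) Let β > 0 and λ ∈ ℝ. Suppose ω ∈ C²(S) is positive in S, extends continuously to the closure of S with ω = 0 on ∂S, this extension is C¹ on the closure of S, and ω solves (E_{β,λ}) in S. Then λ > 0. -/
/-!
Suppose `λ ≤ 0`. With `a = (β²ω² + |∇ω|²)^(p/2-1) > 0` the equation reads
`div (a ∇ω) = -βλ a ω ≥ 0`, so `ω` is a subsolution of the elliptic operator `div (a ∇ ·)`.
Since `ω` vanishes on `∂S`, a superlevel set `U = {ω > c}` with `c > 0` has compact closure in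
`S`, and `ω` is larger somewhere in `U` than anywhere on `∂U`. Adding a small multiple of
`exp ⟪u, x⟫`, with `u` so long that `a |u|² + Da u > 0` on the closure of `U`, keeps the maximum
inside `U`; there the first- and second-order conditions force `div (a ∇ω) < 0`. The perturbation
is what handles the borderline case `λ = 0`.
-/

open Metric Set

noncomputable section

/-- The Hessian `D²v` of `v` at `x`, as a continuous linear map (the derivative of the
gradient field). -/
def hess {d : ℕ} (v : EuclideanSpace ℝ (Fin d) → ℝ) (x : EuclideanSpace ℝ (Fin d)) :
    EuclideanSpace ℝ (Fin d) →L[ℝ] EuclideanSpace ℝ (Fin d) :=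
  fderiv ℝ (gradient v) x

/-- The Laplacian `Δv = tr (D²v)`. -/
def lap {d : ℕ} (v : EuclideanSpace ℝ (Fin d) → ℝ) (x : EuclideanSpace ℝ (Fin d)) : ℝ :=
  LinearMap.trace ℝ _ (hess v x).toLinearMap

/-- The quasilinear operator `Q_β[v] = -Δv - (p-2) (D²v ∇v · ∇v)/(1+|∇v|²) + β(p-1)|∇v|²`. -/
def Qop {d : ℕ} (p β : ℝ) (v : EuclideanSpace ℝ (Fin d) → ℝ) (x : EuclideanSpace ℝ (Fin d)) : ℝ :=
  -lap v x
    - (p - 2) * (inner ℝ (hess v x (gradient v x)) (gradient v x) : ℝ) / (1 + ‖gradient v x‖ ^ 2)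
    + β * (p - 1) * ‖gradient v x‖ ^ 2

/-- `ρ(x) = dist(x, ∂S)`, the distance to the boundary of `S`. -/
def bdist {d : ℕ} (S : Set (EuclideanSpace ℝ (Fin d))) (x : EuclideanSpace ℝ (Fin d)) : ℝ :=
  Metric.infDist x (frontier S)

/-- `v` blows up at `∂S`. -/
def BlowsUp {d : ℕ} (S : Set (EuclideanSpace ℝ (Fin d))) (v : EuclideanSpace ℝ (Fin d) → ℝ) :
    Prop :=
  ∀ K : ℝ, ∃ δ > 0, ∀ x ∈ S, bdist S x < δ → v x > K

/-- Smooth-domain assumption: for some `δ₀ > 0` the boundary distance `ρ` is `C²` with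
`|∇ρ| = 1` on the collar `{x ∈ S : ρ(x) < δ₀}`. -/
def SmoothCollar {d : ℕ} (S : Set (EuclideanSpace ℝ (Fin d))) : Prop :=
  ∃ δ₀ > 0,
    ContDiffOn ℝ 2 (bdist S) {x ∈ S | bdist S x < δ₀} ∧
      ∀ x ∈ S, bdist S x < δ₀ → ‖gradient (bdist S) x‖ = 1

/-- Divergence of a vector field: `div F = ∑ i, ∂F_i/∂x_i`. -/
def dvg {d : ℕ} (F : EuclideanSpace ℝ (Fin d) → EuclideanSpace ℝ (Fin d))
    (x : EuclideanSpace ℝ (Fin d)) : ℝ :=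
  ∑ i : Fin d, fderiv ℝ (fun y => F y i) x (EuclideanSpace.single i 1)

/-- `ω` solves `(E_{β,λ})`: the field `(β²ω² + |∇ω|²)^{p/2-1} ∇ω` is `C¹` on `S` and
`-div((β²ω² + |∇ω|²)^{p/2-1} ∇ω) = βλ (β²ω² + |∇ω|²)^{p/2-1} ω` in `S`. -/
def SolvesE {d : ℕ} (p β lam : ℝ) (S : Set (EuclideanSpace ℝ (Fin d)))
    (ω : EuclideanSpace ℝ (Fin d) → ℝ) : Prop :=
  ContDiffOn ℝ 1
      (fun y => (β ^ 2 * ω y ^ 2 + ‖gradient ω y‖ ^ 2) ^ (p / 2 - 1) • gradient ω y) S ∧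
    ∀ x ∈ S,
      -dvg (fun y => (β ^ 2 * ω y ^ 2 + ‖gradient ω y‖ ^ 2) ^ (p / 2 - 1) • gradient ω y) x =
        β * lam * (β ^ 2 * ω x ^ 2 + ‖gradient ω x‖ ^ 2) ^ (p / 2 - 1) * ω x

end

open Filter Topology
open scoped RealInnerProductSpace

theorem IsLocalMax.deriv_deriv_nonpos {f : ℝ → ℝ} {x₀ : ℝ} (h : IsLocalMax f x₀)
    (hc : ContinuousAt f x₀) : deriv (deriv f) x₀ ≤ 0 := by
  by_contra! hpos
  have hmin := isLocalMin_of_deriv_deriv_pos hpos h.deriv_eq_zero hc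
  have hconst : f =ᶠ[𝓝 x₀] fun _ => f x₀ := by
    filter_upwards [h, hmin] with x hmax hmin using le_antisymm hmax hmin
  have : deriv (deriv f) x₀ = 0 := by
    rw [hconst.deriv.deriv_eq]
    simp
  exact hpos.ne' this

section NormedSpace

variable {E : Type*} [NormedAddCommGroup E] [NormedSpace ℝ E]

theorem ContDiffAt.differentiableAt_fderiv_apply {f : E → ℝ} {x : E} (hf : ContDiffAt ℝ 2 f x)
    (v : E) : DifferentiableAt ℝ (fun z => fderiv ℝ f z v) x :=
  ((hf.fderiv_right (m := 1) le_rfl).clm_apply contDiffAt_const).differentiableAt one_ne_zero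

theorem IsLocalMax.fderiv_fderiv_apply_self_nonpos {f : E → ℝ} {x : E} (h : IsLocalMax f x)
    (hf : ContDiffAt ℝ 2 f x) (v : E) : fderiv ℝ (fun z => fderiv ℝ f z v) x v ≤ 0 := by
  set ℓ : ℝ → E := fun t => x + t • v
  have hℓ : ∀ t, HasDerivAt ℓ v t := fun t => by
    simpa [ℓ] using ((hasDerivAt_id t).smul_const v).const_add x
  have hℓ0 : ℓ 0 = x := by simp [ℓ]
  have hℓx : Tendsto ℓ (𝓝 0) (𝓝 x) := hℓ0 ▸ (hℓ 0).continuousAt.tendsto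
  have hderiv : deriv (f ∘ ℓ) =ᶠ[𝓝 0] fun t => fderiv ℝ f (ℓ t) v := by
    filter_upwards [hℓx.eventually (hf.eventually (by simp))] with t ht
    exact ((ht.differentiableAt two_ne_zero).hasFDerivAt.comp_hasDerivAt t (hℓ t)).deriv
  have hmax : IsLocalMax (f ∘ ℓ) 0 := (hℓ0 ▸ h).comp_continuous (hℓ 0).continuousAt
  calc fderiv ℝ (fun z => fderiv ℝ f z v) x v = deriv (deriv (f ∘ ℓ)) 0 := by
        rw [hderiv.deriv_eq]
        have hG := hf.differentiableAt_fderiv_apply v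
        rw [← hℓ0] at hG
        exact (hℓ0 ▸ (hG.hasFDerivAt.comp_hasDerivAt 0 (hℓ 0)).deriv).symm
    _ ≤ 0 := hmax.deriv_deriv_nonpos
        ((hℓ0 ▸ hf.continuousAt : ContinuousAt f (ℓ 0)).comp (hℓ 0).continuousAt)

theorem IsLocalMax.fderiv_eq_neg_of_add {f φ : E → ℝ} {x : E}
    (h : IsLocalMax (fun z => f z + φ z) x) (hf : DifferentiableAt ℝ f x)
    (hφ : DifferentiableAt ℝ φ x) : fderiv ℝ f x = -fderiv ℝ φ x := by
  have := h.fderiv_eq_zero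
  rw [fderiv_fun_add hf hφ] at this
  exact eq_neg_of_add_eq_zero_left this

theorem IsLocalMax.fderiv_fderiv_apply_self_le_of_add {f φ : E → ℝ} {x : E}
    (h : IsLocalMax (fun z => f z + φ z) x) (hf : ContDiffAt ℝ 2 f x)
    (hφ : ContDiffAt ℝ 2 φ x) (v : E) :
    fderiv ℝ (fun z => fderiv ℝ f z v) x v ≤ -fderiv ℝ (fun z => fderiv ℝ φ z v) x v := by
  have hsum : (fun z => fderiv ℝ (fun z => f z + φ z) z v) =ᶠ[𝓝 x]
      fun z => fderiv ℝ f z v + fderiv ℝ φ z v := by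
    filter_upwards [hf.eventually (by simp), hφ.eventually (by simp)] with z hfz hφz
    rw [fderiv_fun_add (hfz.differentiableAt two_ne_zero) (hφz.differentiableAt two_ne_zero)]
    rfl
  have := h.fderiv_fderiv_apply_self_nonpos (hf.add hφ) v
  rw [hsum.fderiv_eq, fderiv_fun_add (hf.differentiableAt_fderiv_apply v)
    (hφ.differentiableAt_fderiv_apply v)] at this
  simp only [add_apply] at this
  linarith

theorem hasFDerivAt_mul_exp (ε : ℝ) (ℓ : StrongDual ℝ E) (x : E) :
    HasFDerivAt (fun z => ε * Real.exp (ℓ z)) ((ε * Real.exp (ℓ x)) • ℓ) x := by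
  have := ((Real.hasDerivAt_exp (ℓ x)).comp_hasFDerivAt x ℓ.hasFDerivAt).const_mul ε
  simpa [smul_smul] using this

theorem fderiv_fderiv_mul_exp_apply_self (ε : ℝ) (ℓ : StrongDual ℝ E) (x v : E) :
    fderiv ℝ (fun z => fderiv ℝ (fun z => ε * Real.exp (ℓ z)) z v) x v
      = ε * Real.exp (ℓ x) * ℓ v ^ 2 := by
  have hfd : (fun z => fderiv ℝ (fun z => ε * Real.exp (ℓ z)) z v)
      = fun z => ε * ℓ v * Real.exp (ℓ z) := by
    funext z
    rw [(hasFDerivAt_mul_exp ε ℓ z).fderiv]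
    simp only [smul_apply, smul_eq_mul]
    ring
  rw [hfd, (hasFDerivAt_mul_exp (ε * ℓ v) ℓ x).fderiv]
  simp only [smul_apply, smul_eq_mul]
  ring

end NormedSpace

section Topology

variable {X : Type*} [TopologicalSpace X]

theorem IsCompact.exists_pos_forall_mul_add_pos {K : Set X} (hK : IsCompact K) {f g : X → ℝ}
    (hf : ContinuousOn f K) (hg : ContinuousOn g K) (hpos : ∀ x ∈ K, 0 < f x) :
    ∃ γ > 0, ∀ x ∈ K, 0 < γ * f x + g x := by
  obtain ⟨f₀, hf₀, hf₀le⟩ := hK.exists_forall_le' hf hpos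
  obtain ⟨B, hB⟩ := hK.exists_bound_of_continuousOn hg
  refine ⟨(|B| + 1) / f₀, by positivity, fun x hx => ?_⟩
  have hgx : -|B| ≤ g x := by
    have := hB x hx
    rw [Real.norm_eq_abs] at this
    linarith [neg_abs_le (g x), le_abs_self B]
  calc 0 < (|B| + 1) / f₀ * f₀ - |B| := by field_simp; linarith
    _ ≤ (|B| + 1) / f₀ * f x + g x := by
      have : (|B| + 1) / f₀ * f₀ ≤ (|B| + 1) / f₀ * f x := by gcongr; exact hf₀le x hx
      linarith

theorem exists_isLocalMax_add_mul_of_frontier_lt {U : Set X} (hU : IsOpen U)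
    (hUc : IsCompact (closure U)) {f g : X → ℝ} (hf : ContinuousOn f (closure U))
    (hg : ContinuousOn g (closure U)) {x₀ : X} (hx₀ : x₀ ∈ U) {m : ℝ}
    (hm : ∀ x ∈ frontier U, f x ≤ m) (hmx : m < f x₀) :
    ∃ ε > 0, ∃ y ∈ U, IsLocalMax (fun z => f z + ε * g z) y := by
  obtain ⟨B, hB⟩ := hUc.exists_bound_of_continuousOn hg
  have hεg (ε : ℝ) (hε : 0 < ε) (x : X) (hx : x ∈ closure U) : |ε * g x| ≤ ε * |B| := by
    rw [abs_mul, abs_of_pos hε]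
    exact mul_le_mul_of_nonneg_left
      ((Real.norm_eq_abs (g x) ▸ hB x hx).trans (le_abs_self B)) hε.le
  set ε := (f x₀ - m) / (2 * (|B| + 1))
  have hε : 0 < ε := div_pos (by linarith) (by positivity)
  have hεB : ε * |B| < (f x₀ - m) / 2 := by
    have : ε * (2 * (|B| + 1)) = f x₀ - m := div_mul_cancel₀ _ (by positivity)
    linarith
  obtain ⟨y, hy, hymax⟩ := hUc.exists_isMaxOn (f := fun z => f z + ε * g z)
    ⟨x₀, subset_closure hx₀⟩ (hf.add (continuousOn_const.mul hg))
  have hyU : y ∈ U := by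
    by_contra hyU
    have hfy := hm y (hU.frontier_eq ▸ ⟨hy, hyU⟩)
    have hle : f x₀ + ε * g x₀ ≤ f y + ε * g y := hymax (subset_closure hx₀)
    linarith [abs_le.mp (hεg ε hε y hy), abs_le.mp (hεg ε hε x₀ (subset_closure hx₀))]
  exact ⟨ε, hε, y, hyU, hymax.isLocalMax (mem_of_superset (hU.mem_nhds hyU) subset_closure)⟩

theorem closure_inter_preimage_Ioi_subset {S : Set X} (hS : IsOpen S) {ω : X → ℝ}
    (hω : ContinuousOn ω (closure S)) (hω₀ : ∀ x ∈ frontier S, ω x = 0) {c : ℝ} (hc : 0 < c) :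
    closure (S ∩ ω ⁻¹' Ioi c) ⊆ S ∩ ω ⁻¹' Ici c := by
  have hclosed : IsClosed (closure S ∩ ω ⁻¹' Ici c) :=
    hω.preimage_isClosed_of_isClosed isClosed_closure isClosed_Ici
  intro x hx
  obtain ⟨hxS, hxc⟩ := closure_minimal
    (inter_subset_inter subset_closure (preimage_mono Ioi_subset_Ici_self)) hclosed hx
  refine ⟨?_, hxc⟩
  by_contra hxS'
  have := hω₀ x (hS.frontier_eq ▸ ⟨hxS, hxS'⟩)
  simp only [mem_preimage, mem_Ici, this] at hxc
  linarith

end Topology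

theorem ContDiffOn.gradient_of_isOpen {F : Type*} [NormedAddCommGroup F]
    [InnerProductSpace ℝ F] [CompleteSpace F] {f : F → ℝ} {S : Set F} {m n : WithTop ℕ∞}
    (hf : ContDiffOn ℝ n f S) (hS : IsOpen S) (hmn : m + 1 ≤ n) : ContDiffOn ℝ m (gradient f) S :=
  (InnerProductSpace.toDual ℝ F).symm.contDiff.comp_contDiffOn (hf.fderiv_of_isOpen hS hmn)

section Euclidean

variable {d : ℕ}
local notation "𝔼" => EuclideanSpace ℝ (Fin d)

theorem gradient_apply_eq_fderiv_single (f : 𝔼 → ℝ) (x : 𝔼) (i : Fin d) :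
    gradient f x i = fderiv ℝ f x (EuclideanSpace.single i 1) := by
  rw [← inner_gradient_left, EuclideanSpace.inner_single_right]
  simp

theorem dvg_smul_gradient {a ω : 𝔼 → ℝ} {x : 𝔼} (ha : DifferentiableAt ℝ a x)
    (hω : ContDiffAt ℝ 2 ω x) :
    dvg (fun z => a z • gradient ω z) x = ∑ i,
      (a x * fderiv ℝ (fun z => fderiv ℝ ω z (EuclideanSpace.single i 1)) x
          (EuclideanSpace.single i 1)
        + fderiv ℝ ω x (EuclideanSpace.single i 1)
          * fderiv ℝ a x (EuclideanSpace.single i 1)) := by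
  refine Finset.sum_congr rfl fun i _ => ?_
  simp only [PiLp.smul_apply, smul_eq_mul, gradient_apply_eq_fderiv_single]
  rw [fderiv_fun_mul ha (hω.differentiableAt_fderiv_apply _)]
  simp only [add_apply, smul_apply, smul_eq_mul]

theorem dvg_smul_gradient_le_of_isLocalMax_add_exp {a ω : 𝔼 → ℝ} {x u : 𝔼} {ε : ℝ}
    (ha : DifferentiableAt ℝ a x) (ha₀ : 0 ≤ a x) (hω : ContDiffAt ℝ 2 ω x)
    (hmax : IsLocalMax (fun z => ω z + ε * Real.exp ⟪u, z⟫) x) :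
    dvg (fun z => a z • gradient ω z) x
      ≤ -(ε * Real.exp ⟪u, x⟫) * (a x * ‖u‖ ^ 2 + fderiv ℝ a x u) := by
  set ℓ : StrongDual ℝ 𝔼 := innerSL ℝ u
  set c := ε * Real.exp (ℓ x)
  have hφ : ContDiffAt ℝ 2 (fun z => ε * Real.exp (ℓ z)) x := by fun_prop
  replace hmax : IsLocalMax (fun z => ω z + ε * Real.exp (ℓ z)) x := hmax
  have hfirst (v : 𝔼) : fderiv ℝ ω x v = -c * ⟪u, v⟫ := by
    rw [hmax.fderiv_eq_neg_of_add (hω.differentiableAt two_ne_zero) (hφ.differentiableAt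
      two_ne_zero), (hasFDerivAt_mul_exp ε ℓ x).fderiv]
    simp [ℓ, c]
  have hsecond (v : 𝔼) :
      fderiv ℝ (fun z => fderiv ℝ ω z v) x v ≤ -c * ⟪u, v⟫ ^ 2 := by
    have := hmax.fderiv_fderiv_apply_self_le_of_add hω hφ v
    rw [fderiv_fderiv_mul_exp_apply_self] at this
    simpa [ℓ, c, neg_mul] using this
  set e : Fin d → 𝔼 := fun i => EuclideanSpace.single i 1
  have hsq : ∑ i, ⟪u, e i⟫ ^ 2 = ‖u‖ ^ 2 := by
    have := (EuclideanSpace.basisFun (Fin d) ℝ).sum_inner_mul_inner u u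
    simp only [EuclideanSpace.basisFun_apply, real_inner_self_eq_norm_sq] at this
    rw [← this]
    refine Finset.sum_congr rfl fun i _ => ?_
    rw [sq, real_inner_comm u (e i)]
  have hlin : ∑ i, ⟪u, e i⟫ * fderiv ℝ a x (e i) = fderiv ℝ a x u := by
    conv_rhs => rw [← (EuclideanSpace.basisFun (Fin d) ℝ).sum_repr' u]
    simp [map_sum, real_inner_comm u, e]
  rw [dvg_smul_gradient ha hω]
  calc ∑ i, (a x * fderiv ℝ (fun z => fderiv ℝ ω z (e i)) x (e i)
        + fderiv ℝ ω x (e i) * fderiv ℝ a x (e i))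
      ≤ ∑ i, (a x * (-c * ⟪u, e i⟫ ^ 2) + -c * ⟪u, e i⟫ * fderiv ℝ a x (e i)) := by
        refine Finset.sum_le_sum fun i _ => ?_
        rw [hfirst]
        gcongr
        exact hsecond _
    _ = -c * (a x * ‖u‖ ^ 2 + fderiv ℝ a x u) := by
        rw [← hsq, ← hlin, Finset.mul_sum, ← Finset.sum_add_distrib, Finset.mul_sum]
        refine Finset.sum_congr rfl fun i _ => ?_
        ring

theorem exists_dvg_smul_gradient_neg [NeZero d] {S U : Set 𝔼} (hS : IsOpen S) (hU : IsOpen U)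
    (hUS : closure U ⊆ S) (hUb : Bornology.IsBounded U) {a ω : 𝔼 → ℝ}
    (ha : ContDiffOn ℝ 1 a S) (ha₀ : ∀ x ∈ S, 0 < a x) (hω : ContDiffOn ℝ 2 ω S) {x₀ : 𝔼}
    (hx₀ : x₀ ∈ U) {m : ℝ} (hm : ∀ x ∈ frontier U, ω x ≤ m) (hmx : m < ω x₀) :
    ∃ y ∈ U, dvg (fun z => a z • gradient ω z) y < 0 := by
  have hUc : IsCompact (closure U) := hUb.isCompact_closure
  set e : 𝔼 := EuclideanSpace.single 0 1
  have hDa : ContinuousOn (fun x => fderiv ℝ a x e) S :=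
    (ha.continuousOn_fderiv_of_isOpen hS le_rfl).clm_apply continuousOn_const
  obtain ⟨γ, hγ, hγa⟩ := hUc.exists_pos_forall_mul_add_pos (ha.continuousOn.mono hUS)
    (hDa.mono hUS) fun x hx => ha₀ x (hUS hx)
  set u : 𝔼 := γ • e
  obtain ⟨ε, hε, y, hyU, hmax⟩ := exists_isLocalMax_add_mul_of_frontier_lt hU hUc
    (hω.continuousOn.mono hUS) (g := fun z => Real.exp ⟪u, z⟫) (by fun_prop) hx₀ hm hmx
  have hyS : y ∈ S := hUS (subset_closure hyU)
  have hpos : 0 < a y * ‖u‖ ^ 2 + fderiv ℝ a y u := by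
    have : a y * ‖u‖ ^ 2 + fderiv ℝ a y u = γ * (γ * a y + fderiv ℝ a y e) := by
      simp [u, e, norm_smul, abs_of_pos hγ]
      ring
    rw [this]
    exact mul_pos hγ (hγa y (subset_closure hyU))
  refine ⟨y, hyU, (dvg_smul_gradient_le_of_isLocalMax_add_exp
    ((ha.differentiableOn one_ne_zero).differentiableAt (hS.mem_nhds hyS)) (ha₀ y hyS).le
    (hω.contDiffAt (hS.mem_nhds hyS)) hmax).trans_lt ?_⟩
  have : 0 < ε * Real.exp ⟪u, y⟫ := by positivity
  nlinarith

end Euclidean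

theorem stmt3_general (d : ℕ) (hd : 2 ≤ d) (p : ℝ)
    (S : Set (EuclideanSpace ℝ (Fin d))) (hSo : IsOpen S) (hSb : Bornology.IsBounded S)
    (hSc : IsConnected S) (β lam : ℝ) (hβ : 0 < β)
    (ω : EuclideanSpace ℝ (Fin d) → ℝ)
    (hω2 : ContDiffOn ℝ 2 ω S) (hωpos : ∀ x ∈ S, 0 < ω x)
    (hω1 : ContDiffOn ℝ 1 ω (closure S)) (hω0 : ∀ x ∈ frontier S, ω x = 0)
    (hsol : SolvesE p β lam S ω) :
    0 < lam := by
  by_contra! hlam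
  have : NeZero d := ⟨by omega⟩
  obtain ⟨z, hz⟩ := hSc.nonempty
  set a := fun y => (β ^ 2 * ω y ^ 2 + ‖gradient ω y‖ ^ 2) ^ (p / 2 - 1)
  have hbase : ∀ x ∈ S, 0 < β ^ 2 * ω x ^ 2 + ‖gradient ω x‖ ^ 2 := fun x hx => by
    have := hωpos x hx
    positivity
  have ha : ContDiffOn ℝ 1 a S :=
    ((contDiffOn_const.mul ((hω2.of_le one_le_two).pow 2)).add
      ((hω2.gradient_of_isOpen hSo le_rfl).norm_sq ℝ)).rpow_const_of_ne
      fun x hx => (hbase x hx).ne'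
  have ha₀ : ∀ x ∈ S, 0 < a x := fun x hx => Real.rpow_pos_of_pos (hbase x hx) _
  set U := S ∩ ω ⁻¹' Ioi (ω z / 2)
  have hUcl :=
    closure_inter_preimage_Ioi_subset hSo hω1.continuousOn hω0 (half_pos (hωpos z hz))
  have hU : IsOpen U := hω2.continuousOn.isOpen_inter_preimage hSo isOpen_Ioi
  have hfr : ∀ x ∈ frontier U, ω x ≤ ω z / 2 := fun x hx => by
    rw [hU.frontier_eq] at hx
    exact not_lt.mp fun hlt => hx.2 ⟨(hUcl hx.1).1, hlt⟩
  obtain ⟨y, hyU, hy⟩ := exists_dvg_smul_gradient_neg hSo hU (hUcl.trans inter_subset_left)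
    (hSb.subset inter_subset_left) ha ha₀ hω2 (x₀ := z) ⟨hz, half_lt_self (hωpos z hz)⟩ hfr
    (half_lt_self (hωpos z hz))
  have heq := hsol.2 y hyU.1
  have : 0 < β * a y * ω y := by have := ha₀ y hyU.1; have := hωpos y hyU.1; positivity
  nlinarith

/-- (Positivity of the ergodic constant) If `ω ∈ C²(S)` is positive in `S`, is `C¹` up to the
closure of `S`, vanishes on `∂S`, and solves `(E_{β,λ})` in `S`, then `λ > 0`. -/
theorem stmt3 (d : ℕ) (hd : 2 ≤ d) (p : ℝ) (hp : 1 < p)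
    (S : Set (EuclideanSpace ℝ (Fin d))) (hSo : IsOpen S) (hSb : Bornology.IsBounded S)
    (hSc : IsConnected S) (hSm : SmoothCollar S) (β lam : ℝ) (hβ : 0 < β)
    (ω : EuclideanSpace ℝ (Fin d) → ℝ)
    (hω2 : ContDiffOn ℝ 2 ω S) (hωpos : ∀ x ∈ S, 0 < ω x)
    (hω1 : ContDiffOn ℝ 1 ω (closure S)) (hω0 : ∀ x ∈ frontier S, ω x = 0)
    (hsol : SolvesE p β lam S ω) :
    0 < lam :=
  stmt3_general d hd p S hSo hSb hSc β lam hβ ω hω2 hωpos hω1 hω0 hsol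
end

section
/- (Proposition 2.3, blow-up of the ergodic constant as β → 0⁺) For every K > 0 there exists β̄ > 0 such that: whenever 0 < β < β̄, λ ∈ ℝ, and v ∈ C²(S) satisfies Q_β[v] = -λ at every point of S with v blowing up at ∂S, then λ ≥ K. -/
/-!
Compare `v` with the paraboloid `ψ y = K ‖y‖²`. Since `v` blows up at `∂S` and `ψ` is bounded
on `S`, `v - ψ` attains its minimum at some `x₀ ∈ S`; there `∇v = 2K x₀` and `D²v ≥ 2K`.
For such a Hessian the principal part `Δv + (p-2) (D²v ∇v · ∇v)/(1+|∇v|²)` is at least `2K`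
(for `p < 2` this needs `d ≥ 2`), while `|∇v(x₀)| ≤ 2KR` on `S ⊆ B_R`, so the gradient term
`β(p-1)|∇v|²` stays below `K` once `β < 1/(4(p-1)KR²)`. The equation at `x₀` gives `λ ≥ 2K - K`.
-/

open Metric Set

noncomputable section

open Filter InnerProductSpace Topology Module
open scoped RealInnerProductSpace

section Trace

variable {E : Type*} [NormedAddCommGroup E] [InnerProductSpace ℝ E] [FiniteDimensional ℝ E]

theorem LinearMap.trace_nonneg_of_inner_nonneg {T : E →ₗ[ℝ] E} (hT : ∀ u, 0 ≤ ⟪u, T u⟫) :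
    0 ≤ T.trace ℝ E := by
  rw [T.trace_eq_sum_inner (stdOrthonormalBasis ℝ E)]
  exact Finset.sum_nonneg fun i _ => hT _

theorem LinearMap.inner_le_sq_norm_mul_trace {T : E →ₗ[ℝ] E} (hT : ∀ u, 0 ≤ ⟪u, T u⟫) (g : E) :
    ⟪g, T g⟫ ≤ ‖g‖ ^ 2 * T.trace ℝ E := by
  rcases eq_or_ne g 0 with rfl | hg
  · simp
  have hg' : ‖g‖ ≠ 0 := norm_ne_zero_iff.mpr hg
  set u := ‖g‖⁻¹ • g with hu
  have hu_orth : Orthonormal ℝ ((↑) : ({u} : Set E) → E) := by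
    classical
    rw [orthonormal_subtype_iff_ite]
    rintro x rfl y rfl
    simp [hu, norm_smul, hg']
  obtain ⟨s, b, hus, hb⟩ := hu_orth.exists_orthonormalBasis_extension
  have hu_trace : ⟪u, T u⟫ ≤ T.trace ℝ E := by
    rw [T.trace_eq_sum_inner b]
    have := Finset.single_le_sum (f := fun i => ⟪b i, T (b i)⟫) (fun i _ => hT _)
      (Finset.mem_univ ⟨u, hus rfl⟩)
    simpa [hb] using this
  calc ⟪g, T g⟫ = ‖g‖ ^ 2 * ⟪u, T u⟫ := by
        simp only [hu, map_smul, real_inner_smul_left, real_inner_smul_right]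
        field_simp
    _ ≤ ‖g‖ ^ 2 * T.trace ℝ E := by gcongr

theorem le_trace_add_mul_inner_div (hE : 2 ≤ finrank ℝ E) {p c : ℝ} (hp : 1 < p) (hc : 0 ≤ c)
    {H : E →L[ℝ] E} (hH : ∀ u, c * ‖u‖ ^ 2 ≤ ⟪u, H u⟫) (g : E) :
    c ≤ LinearMap.trace ℝ E H.toLinearMap + (p - 2) * ⟪H g, g⟫ / (1 + ‖g‖ ^ 2) := by
  set T : E →ₗ[ℝ] E := H.toLinearMap - c • LinearMap.id
  have hT : ∀ u, 0 ≤ ⟪u, T u⟫ := fun u => by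
    simp only [T, LinearMap.sub_apply, LinearMap.smul_apply, LinearMap.id_apply,
      ContinuousLinearMap.coe_coe, inner_sub_right, inner_smul_right, real_inner_self_eq_norm_sq]
    linarith [hH u]
  have htrace : LinearMap.trace ℝ E H.toLinearMap = T.trace ℝ E + c * finrank ℝ E := by
    simp [T, LinearMap.trace_id]
  have hHg : ⟪H g, g⟫ = ⟪g, T g⟫ + c * ‖g‖ ^ 2 := by
    simp only [T, LinearMap.sub_apply, LinearMap.smul_apply, LinearMap.id_apply,
      ContinuousLinearMap.coe_coe, inner_sub_right, inner_smul_right, real_inner_self_eq_norm_sq,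
      real_inner_comm g]
    ring
  have ht := LinearMap.trace_nonneg_of_inner_nonneg hT
  have hTg := hT g
  have hTg_le := LinearMap.inner_le_sq_norm_mul_trace hT g
  have hn : (2 : ℝ) ≤ finrank ℝ E := by exact_mod_cast hE
  rw [htrace, hHg]
  set t := T.trace ℝ E
  set s := ‖g‖ ^ 2
  have hs : 0 ≤ s := by positivity
  rcases le_or_gt 2 p with hp2 | hp2
  · have : 0 ≤ (p - 2) * (⟪g, T g⟫ + c * s) / (1 + s) := by positivity
    nlinarith
  · -- `(⟪g, T g⟫ + c s) / (1 + s) ≤ t + c`, so the sum is `≥ (p - 1) t + c (n + p - 2) ≥ c`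
    have hquot : (p - 2) * (t + c) ≤ (p - 2) * (⟪g, T g⟫ + c * s) / (1 + s) := by
      rw [le_div_iff₀ (by positivity)]
      nlinarith [mul_nonneg (by linarith : (0 : ℝ) ≤ 2 - p)
        (by nlinarith : (0 : ℝ) ≤ t + c + s * t - ⟪g, T g⟫)]
    nlinarith [mul_nonneg (by linarith : (0 : ℝ) ≤ p - 1) ht]

end Trace

theorem IsLocalMin.nonneg_of_hasDerivAt_of_hasDerivAt {f f' : ℝ → ℝ} {x a : ℝ}
    (hmin : IsLocalMin f x) (hf : ∀ᶠ t in 𝓝 x, HasDerivAt f (f' t) t)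
    (hf' : HasDerivAt f' a x) : 0 ≤ a := by
  by_contra! ha
  have hcrit : f' x = 0 := hmin.hasDerivAt_eq_zero hf.self_of_nhds
  have hsign := eventually_nhdsWithin_sign_eq_of_deriv_neg (hf'.deriv ▸ ha) hcrit
  obtain ⟨ε, hε, hball⟩ := Metric.eventually_nhds_iff_ball.mp (hf.and (hmin.and hsign))
  have hball' : ∀ t ∈ Icc x (x + ε / 2), t ∈ ball x ε := fun t ht => by
    rw [mem_ball, Real.dist_eq, abs_lt]; constructor <;> linarith [ht.1, ht.2]
  -- by the mean value theorem `f` decreases strictly on `[x, x + ε/2]`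
  obtain ⟨ξ, hξ, hslope⟩ := exists_hasDerivAt_eq_slope f f' (by linarith : x < x + ε / 2)
    (fun t ht => (hball t (hball' t ht)).1.continuousAt.continuousWithinAt)
    (fun t ht => (hball t (hball' t (Ioo_subset_Icc_self ht))).1)
  have hξ_neg : f' ξ < 0 := by
    have := (hball ξ (hball' ξ (Ioo_subset_Icc_self hξ))).2.2
    rwa [sign_neg (by linarith [hξ.1] : x - ξ < 0), sign_eq_neg_one_iff] at this
  have hmin' := (hball _ (hball' _ (right_mem_Icc.mpr (by linarith)))).2.1
  rw [hslope, div_neg_iff] at hξ_neg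
  rcases hξ_neg with h | h <;> linarith [h.1, h.2]

section Gradient

variable {F : Type*} [NormedAddCommGroup F] [InnerProductSpace ℝ F] [CompleteSpace F]

theorem IsLocalMin.gradient_eq_of_sub {v ψ : F → ℝ} {x₀ : F}
    (hmin : IsLocalMin (fun y => v y - ψ y) x₀)
    (hv : DifferentiableAt ℝ v x₀) (hψ : DifferentiableAt ℝ ψ x₀) :
    gradient v x₀ = gradient ψ x₀ := by
  have h := hmin.fderiv_eq_zero
  rw [fderiv_fun_sub hv hψ, sub_eq_zero] at h
  rw [gradient, gradient, h]

theorem DifferentiableAt.hasDerivAt_comp_line {w : F → ℝ} {x u : F} {t : ℝ}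
    (hw : DifferentiableAt ℝ w (x + t • u)) :
    HasDerivAt (fun s : ℝ => w (x + s • u)) ⟪u, gradient w (x + t • u)⟫ t := by
  have hline : HasDerivAt (fun s : ℝ => x + s • u) u t := by
    simpa using ((hasDerivAt_id t).smul_const u).const_add x
  rw [real_inner_comm, inner_gradient_left]
  exact hw.hasFDerivAt.comp_hasDerivAt t hline

theorem hasGradientAt_const_mul_norm_sq (a : ℝ) (x : F) :
    HasGradientAt (fun y => a * ‖y‖ ^ 2) ((2 * a) • x) x := by
  rw [hasGradientAt_iff_hasFDerivAt]
  refine ((hasStrictFDerivAt_norm_sq x).hasFDerivAt.const_mul a).congr_fderiv ?_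
  ext y
  simp
  ring

end Gradient

section Hessian

variable {d : ℕ}

local notation "E" => EuclideanSpace ℝ (Fin d)

theorem DifferentiableAt.hasDerivAt_inner_gradient_comp_line {w : E → ℝ} {x u : E}
    (hw : DifferentiableAt ℝ (gradient w) x) :
    HasDerivAt (fun s : ℝ => ⟪u, gradient w (x + s • u)⟫) ⟪u, hess w x u⟫ 0 := by
  have hline : HasDerivAt (fun s : ℝ => x + s • u) u 0 := by
    simpa using ((hasDerivAt_id (0 : ℝ)).smul_const u).const_add x
  have hgrad : HasFDerivAt (gradient w) (hess w x) (x + (0 : ℝ) • u) := by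
    rw [zero_smul, add_zero]
    exact hw.hasFDerivAt
  have hcomp := hgrad.comp_hasDerivAt 0 hline
  exact (innerSL ℝ u).hasFDerivAt.comp_hasDerivAt 0 hcomp

theorem IsLocalMin.inner_hess_le_of_sub {v ψ : E → ℝ} {x₀ : E}
    (hmin : IsLocalMin (fun y => v y - ψ y) x₀)
    (hv : ∀ᶠ y in 𝓝 x₀, DifferentiableAt ℝ v y) (hψ : ∀ᶠ y in 𝓝 x₀, DifferentiableAt ℝ ψ y)
    (hv₂ : DifferentiableAt ℝ (gradient v) x₀) (hψ₂ : DifferentiableAt ℝ (gradient ψ) x₀)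
    (u : E) : ⟪u, hess ψ x₀ u⟫ ≤ ⟪u, hess v x₀ u⟫ := by
  have hline : Continuous fun s : ℝ => x₀ + s • u := by fun_prop
  have hline0 : Tendsto (fun s : ℝ => x₀ + s • u) (𝓝 0) (𝓝 x₀) := by
    simpa using hline.tendsto 0
  have hmin0 : IsLocalMin (fun y => v y - ψ y) (x₀ + (0 : ℝ) • u) := by simpa using hmin
  have key := IsLocalMin.nonneg_of_hasDerivAt_of_hasDerivAt
    (f := fun s => v (x₀ + s • u) - ψ (x₀ + s • u))
    (f' := fun s => ⟪u, gradient v (x₀ + s • u)⟫ - ⟪u, gradient ψ (x₀ + s • u)⟫)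
    (IsLocalMin.comp_continuous (f := fun y => v y - ψ y) (g := fun s : ℝ => x₀ + s • u)
      hmin0 hline.continuousAt)
    (by
      filter_upwards [hline0.eventually (hv.and hψ)] with s hs
      exact hs.1.hasDerivAt_comp_line.sub hs.2.hasDerivAt_comp_line)
    (hv₂.hasDerivAt_inner_gradient_comp_line.sub hψ₂.hasDerivAt_inner_gradient_comp_line)
  linarith

theorem ContDiffOn.differentiableAt_gradient {v : E → ℝ} {S : Set E} (hS : IsOpen S)
    (hv : ContDiffOn ℝ 2 v S) {x : E} (hx : x ∈ S) : DifferentiableAt ℝ (gradient v) x := by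
  have hfd : ContDiffOn ℝ 1 (fderiv ℝ v) S := hv.fderiv_of_isOpen hS (by norm_num)
  have hgrad : ContDiffOn ℝ 1 (gradient v) S :=
    (toDual ℝ E).symm.toContinuousLinearEquiv.contDiff.comp_contDiffOn hfd
  exact (hgrad.differentiableOn one_ne_zero).differentiableAt (hS.mem_nhds hx)

theorem inner_hess_const_mul_norm_sq (a : ℝ) (x u : E) :
    ⟪u, hess (fun y => a * ‖y‖ ^ 2) x u⟫ = 2 * a * ‖u‖ ^ 2 := by
  have hgrad : gradient (fun y : E => a * ‖y‖ ^ 2) = fun y => (2 * a) • y :=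
    funext fun y => (hasGradientAt_const_mul_norm_sq a y).gradient
  have hscale : HasFDerivAt (fun y : E => (2 * a) • y) ((2 * a) • ContinuousLinearMap.id ℝ E) x :=
    (hasFDerivAt_id x).const_smul (2 * a)
  rw [hess, hgrad, hscale.fderiv]
  simp [real_inner_smul_right]

end Hessian

section BlowsUp

variable {d : ℕ} {S : Set (EuclideanSpace ℝ (Fin d))} {v : EuclideanSpace ℝ (Fin d) → ℝ}

theorem BlowsUp.sub_of_bddAbove (hv : BlowsUp S v) {ψ : EuclideanSpace ℝ (Fin d) → ℝ}
    (hψ : BddAbove (ψ '' S)) : BlowsUp S fun y => v y - ψ y := by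
  obtain ⟨M, hM⟩ := hψ
  intro K
  obtain ⟨δ, hδ, hfar⟩ := hv (K + M)
  exact ⟨δ, hδ, fun x hx hxδ => by linarith [hfar x hx hxδ, hM (mem_image_of_mem ψ hx)]⟩

theorem BlowsUp.frontier_nonempty (hv : BlowsUp S v) (hS : S.Nonempty) :
    (frontier S).Nonempty := by
  by_contra! hfr
  obtain ⟨z, hz⟩ := hS
  obtain ⟨δ, hδ, hfar⟩ := hv (v z)
  exact lt_irrefl _ (hfar z hz (by simpa [bdist, hfr] using hδ))

theorem bdist_pos (hS : IsOpen S) (hfr : (frontier S).Nonempty) {x : EuclideanSpace ℝ (Fin d)}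
    (hx : x ∈ S) : 0 < bdist S x :=
  (isClosed_frontier.notMem_iff_infDist_pos hfr).mp fun hxfr =>
    (hS.frontier_eq ▸ hxfr).2 hx

/-- Near `∂S` the function exceeds its value at a fixed point, and away from `∂S` it lives
on a compact subset of `S`. -/
theorem BlowsUp.exists_isMinOn (hv : BlowsUp S v) (hSo : IsOpen S)
    (hSb : Bornology.IsBounded S) (hS : S.Nonempty) (hcont : ContinuousOn v S) :
    ∃ x₀ ∈ S, IsMinOn v S x₀ := by
  obtain ⟨z, hz⟩ := hS
  obtain ⟨δ, hδ, hfar⟩ := hv (v z)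
  set r := min δ (bdist S z)
  have hr : 0 < r := lt_min hδ (bdist_pos hSo (hv.frontier_nonempty ⟨z, hz⟩) hz)
  set T := {x ∈ closure S | r ≤ bdist S x}
  have hTS : T ⊆ S := fun x hx => by
    by_contra hxS
    have hxfr : x ∈ frontier S := by rw [hSo.frontier_eq]; exact ⟨hx.1, hxS⟩
    have hx0 : bdist S x = 0 := infDist_zero_of_mem hxfr
    linarith [hx.2]
  have hT : IsCompact T :=
    isCompact_of_isClosed_isBounded
      (isClosed_closure.inter (isClosed_le continuous_const (continuous_infDist_pt _)))
      (hSb.closure.subset fun x hx => hx.1)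
  have hzT : z ∈ T := ⟨subset_closure hz, min_le_right _ _⟩
  obtain ⟨x₀, hx₀T, hmin⟩ := hT.exists_isMinOn ⟨z, hzT⟩ (hcont.mono hTS)
  refine ⟨x₀, hTS hx₀T, fun x hx => ?_⟩
  by_cases hxT : r ≤ bdist S x
  · exact hmin ⟨subset_closure hx, hxT⟩
  · have hvx := hfar x hx ((not_le.mp hxT).trans_le (min_le_left _ _))
    have hvz : v x₀ ≤ v z := hmin hzT
    exact (hvz.trans hvx.le : v x₀ ≤ v x)

theorem BlowsUp.exists_gradient_eq_smul_and_le_inner_hess (hv : BlowsUp S v) (hSo : IsOpen S)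
    (hSb : Bornology.IsBounded S) (hS : S.Nonempty) (hv₂ : ContDiffOn ℝ 2 v S) (a : ℝ) :
    ∃ x₀ ∈ S, gradient v x₀ = (2 * a) • x₀ ∧ ∀ u, 2 * a * ‖u‖ ^ 2 ≤ ⟪u, hess v x₀ u⟫ := by
  set ψ : EuclideanSpace ℝ (Fin d) → ℝ := fun y => a * ‖y‖ ^ 2
  have hψ : ContDiff ℝ 2 ψ := contDiff_const.mul (contDiff_norm_sq ℝ)
  have hψS : BddAbove (ψ '' S) :=
    (hSb.isCompact_closure.bddAbove_image hψ.continuous.continuousOn).mono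
      (image_mono subset_closure)
  obtain ⟨x₀, hx₀, hmin⟩ := (hv.sub_of_bddAbove hψS).exists_isMinOn hSo hSb hS
    (hv₂.continuousOn.sub hψ.continuous.continuousOn)
  have hloc : IsLocalMin (fun y => v y - ψ y) x₀ := hmin.isLocalMin (hSo.mem_nhds hx₀)
  have hv₁ : ∀ᶠ y in 𝓝 x₀, DifferentiableAt ℝ v y :=
    eventually_of_mem (hSo.mem_nhds hx₀) fun y hy =>
      (hv₂.differentiableOn two_ne_zero).differentiableAt (hSo.mem_nhds hy)
  have hψ₁ : ∀ᶠ y in 𝓝 x₀, DifferentiableAt ℝ ψ y :=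
    Eventually.of_forall fun y => (hψ.differentiable two_ne_zero).differentiableAt
  refine ⟨x₀, hx₀, ?_, fun u => ?_⟩
  · exact (hloc.gradient_eq_of_sub hv₁.self_of_nhds hψ₁.self_of_nhds).trans
      (hasGradientAt_const_mul_norm_sq a x₀).gradient
  · exact inner_hess_const_mul_norm_sq a x₀ u ▸ hloc.inner_hess_le_of_sub hv₁ hψ₁
      (hv₂.differentiableAt_gradient hSo hx₀)
      (hψ.contDiffOn.differentiableAt_gradient isOpen_univ (mem_univ x₀)) u

end BlowsUp

theorem stmt14_general (d : ℕ) (hd : 2 ≤ d) (p : ℝ) (hp : 1 < p)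
    (S : Set (EuclideanSpace ℝ (Fin d))) (hSo : IsOpen S) (hSb : Bornology.IsBounded S)
    (hSc : IsConnected S) (K : ℝ) (hK : 0 < K) :
    ∃ βbar : ℝ, 0 < βbar ∧
      ∀ β : ℝ, 0 < β → β < βbar →
        ∀ lam : ℝ, ∀ v : EuclideanSpace ℝ (Fin d) → ℝ,
          ContDiffOn ℝ 2 v S → (∀ x ∈ S, Qop p β v x = -lam) → BlowsUp S v →
          K ≤ lam := by
  obtain ⟨R, hR, hSR⟩ := hSb.exists_pos_norm_le
  have hp₁ : 0 < p - 1 := sub_pos.mpr hp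
  refine ⟨1 / (4 * (p - 1) * K * R ^ 2), by positivity, ?_⟩
  intro β hβ hβbar lam v hv hQ hblow
  obtain ⟨x₀, hx₀, hgrad, hhess⟩ :=
    hblow.exists_gradient_eq_smul_and_le_inner_hess hSo hSb hSc.nonempty hv K
  have hprincipal := le_trace_add_mul_inner_div (by simpa using hd) hp (by positivity) hhess
    (gradient v x₀)
  have hgradient_term : β * (p - 1) * ‖gradient v x₀‖ ^ 2 < K := by
    have hβ' : β * (4 * (p - 1) * K * R ^ 2) < 1 := by
      rwa [lt_div_iff₀ (by positivity)] at hβbar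
    calc β * (p - 1) * ‖gradient v x₀‖ ^ 2 ≤ β * (p - 1) * (2 * K * R) ^ 2 := by
          rw [hgrad, norm_smul, Real.norm_of_nonneg (by positivity)]
          gcongr
          exact hSR x₀ hx₀
      _ = K * (β * (4 * (p - 1) * K * R ^ 2)) := by ring
      _ < K := mul_lt_of_lt_one_right hK hβ'
  have hQx₀ := hQ x₀ hx₀
  rw [Qop, lap] at hQx₀
  linarith

/-- (Proposition 2.3, blow-up of the ergodic constant as `β → 0⁺`). -/
theorem stmt14 (d : ℕ) (hd : 2 ≤ d) (p : ℝ) (hp : 1 < p)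
    (S : Set (EuclideanSpace ℝ (Fin d))) (hSo : IsOpen S) (hSb : Bornology.IsBounded S)
    (hSc : IsConnected S) (hSm : SmoothCollar S) (K : ℝ) (hK : 0 < K) :
    ∃ βbar : ℝ, 0 < βbar ∧
      ∀ β : ℝ, 0 < β → β < βbar →
        ∀ lam : ℝ, ∀ v : EuclideanSpace ℝ (Fin d) → ℝ,
          ContDiffOn ℝ 2 v S → (∀ x ∈ S, Qop p β v x = -lam) → BlowsUp S v →
          K ≤ lam :=
  stmt14_general d hd p hp S hSo hSb hSc K hK
end
end
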